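/- arXiv:1209.1249 — 2 statements merged into one kernel-verified Lean document; each statement's English description precedes it below -/
import Mathlib

section
/- Spherical median inequality: let a, b, c be unit vectors in ℝ³ with arccos⟪a,b⟫ + arccos⟪a,c⟫ < π. Then b + c ≠ 0, and the spherical midpoint m = (b + c)/‖b + c‖ of b and c satisfies arccos⟪a,m⟫ ≤ (arccos⟪a,b⟫ + arccos⟪a,c⟫)/2; that is, the median of the (possibly degenerate) spherical triangle abc from a is at most half the sum of the two adjacent sides. -/
open scoped RealInnerProductSpace

set_option maxHeartbeats 1000000 in
/-- **Spherical median inequality**: let `a, b, c` be unit vectors in `ℝ³` with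
`arccos ⟪a,b⟫ + arccos ⟪a,c⟫ < π`. Then `b + c ≠ 0`, and the spherical midpoint
`m = (b + c)/‖b + c‖` of `b` and `c` satisfies
`arccos ⟪a,m⟫ ≤ (arccos ⟪a,b⟫ + arccos ⟪a,c⟫) / 2`. -/
theorem spherical_median_inequality
    (a b c : EuclideanSpace ℝ (Fin 3))
    (ha : ‖a‖ = 1) (hb : ‖b‖ = 1) (hc : ‖c‖ = 1)
    (h : Real.arccos ⟪a, b⟫ + Real.arccos ⟪a, c⟫ < Real.pi) :
    b + c ≠ 0 ∧
      Real.arccos ⟪a, ‖b + c‖⁻¹ • (b + c)⟫ ≤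
        (Real.arccos ⟪a, b⟫ + Real.arccos ⟪a, c⟫) / 2 := by
  set p := ⟪a, b⟫ with hp
  set q := ⟪a, c⟫ with hq
  have hp1 : |p| ≤ 1 := by
    have := abs_real_inner_le_norm a b
    rwa [ha, hb, one_mul] at this
  have hq1 : |q| ≤ 1 := by
    have := abs_real_inner_le_norm a c
    rwa [ha, hc, one_mul] at this
  obtain ⟨hpl, hpu⟩ := abs_le.mp hp1
  obtain ⟨hql, hqu⟩ := abs_le.mp hq1
  set β := Real.arccos p with hβ
  set γ := Real.arccos q with hγ
  have hcosβ : Real.cos β = p := Real.cos_arccos hpl hpu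
  have hcosγ : Real.cos γ = q := Real.cos_arccos hql hqu
  have hsinβ : Real.sin β = Real.sqrt (1 - p ^ 2) := Real.sin_arccos p
  have hsinγ : Real.sin γ = Real.sqrt (1 - q ^ 2) := Real.sin_arccos q
  have hβ0 : 0 ≤ β := Real.arccos_nonneg p
  have hγ0 : 0 ≤ γ := Real.arccos_nonneg q
  -- b + c ≠ 0
  have hne : b + c ≠ 0 := by
    intro hbc
    have hcb : c = -b := eq_neg_of_add_eq_zero_right hbc
    have : q = -p := by rw [hq, hcb, inner_neg_right, hp]
    rw [hγ, this, Real.arccos_neg, ← hβ] at h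
    linarith
  have hn0 : (0:ℝ) < ‖b + c‖ := norm_pos_iff.mpr hne
  set n := ‖b + c‖ with hn
  have hr : n ^ 2 = 2 + 2 * ⟪b, c⟫ := by
    rw [hn, @norm_add_sq_real, hb, hc]; ring
  set r := ⟪b, c⟫ with hrr
  -- Cauchy-Schwarz for components orthogonal to a
  set S := Real.sqrt (1 - p ^ 2) * Real.sqrt (1 - q ^ 2) with hS
  have hS0 : 0 ≤ S := mul_nonneg (Real.sqrt_nonneg _) (Real.sqrt_nonneg _)
  have hSsq : S ^ 2 = (1 - p ^ 2) * (1 - q ^ 2) := by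
    rw [hS, mul_pow, Real.sq_sqrt (by nlinarith), Real.sq_sqrt (by nlinarith)]
  have hkey : r ≤ p * q + S := by
    set b' := b - p • a with hb'
    set c' := c - q • a with hc'
    have hinner : ⟪b', c'⟫ = r - p * q := by
      rw [hb', hc']
      simp only [inner_sub_left, inner_sub_right, inner_smul_left, inner_smul_right,
        real_inner_self_eq_norm_sq, ha, real_inner_comm a b]
      rw [← hp, ← hq, ← hrr]; ring
    have hnb' : ‖b'‖ ^ 2 = 1 - p ^ 2 := by
      rw [hb', @norm_sub_sq_real, hb, norm_smul, inner_smul_right, ha,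
        real_inner_comm a b, ← hp]
      simp [abs_mul_abs_self]
      ring
    have hnc' : ‖c'‖ ^ 2 = 1 - q ^ 2 := by
      rw [hc', @norm_sub_sq_real, hc, norm_smul, inner_smul_right, ha,
        real_inner_comm a c, ← hq]
      simp [abs_mul_abs_self]
      ring
    have hcs : ⟪b', c'⟫ ≤ ‖b'‖ * ‖c'‖ := real_inner_le_norm b' c'
    have : ‖b'‖ = Real.sqrt (1 - p ^ 2) := by
      rw [← hnb', Real.sqrt_sq (norm_nonneg _)]
    have hcnorm : ‖c'‖ = Real.sqrt (1 - q ^ 2) := by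
      rw [← hnc', Real.sqrt_sq (norm_nonneg _)]
    rw [hinner, this, hcnorm] at hcs
    rw [hS]; linarith
  -- trig setup
  set θ := (β + γ) / 2 with hθ
  have hθ0 : 0 ≤ θ := by positivity
  have hθpi : θ < Real.pi / 2 := by rw [hθ]; linarith
  have hcθ0 : 0 < Real.cos θ := Real.cos_pos_of_mem_Ioo ⟨by linarith [Real.pi_pos], hθpi⟩
  have hcθsq : Real.cos θ ^ 2 = (1 + Real.cos (β + γ)) / 2 := by
    have h1 := Real.cos_sq θ
    have h2 : 2 * θ = β + γ := by rw [hθ]; ring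
    rw [h2] at h1; linarith
  have hcossum : Real.cos (β + γ) = p * q - S := by
    rw [Real.cos_add, hcosβ, hcosγ, hsinβ, hsinγ, hS]
  -- p + q ≥ 0
  have hpq : p + q = 2 * Real.cos θ * Real.cos ((β - γ) / 2) := by
    rw [← hcosβ, ← hcosγ, Real.cos_add_cos, hθ]
  have hcd0 : 0 ≤ Real.cos ((β - γ) / 2) := by
    apply Real.cos_nonneg_of_mem_Icc
    constructor <;> linarith
  have hpq0 : 0 ≤ p + q := by
    rw [hpq]; positivity
  -- key squared inequality
  have hsq : n ^ 2 * Real.cos θ ^ 2 ≤ (p + q) ^ 2 := by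
    have h1 : 0 ≤ 1 + p * q - S := by
      have h2 := sq_nonneg (Real.cos θ)
      rw [hcθsq, hcossum] at h2; linarith
    rw [hr, hcθsq, hcossum]
    nlinarith [mul_le_mul_of_nonneg_right hkey h1, hSsq]
  have hmain : n * Real.cos θ ≤ p + q := by
    nlinarith [mul_nonneg (le_of_lt hn0) (le_of_lt hcθ0)]
  -- inner with midpoint
  have hm : ⟪a, ‖b + c‖⁻¹ • (b + c)⟫ = n⁻¹ * (p + q) := by
    rw [inner_smul_right, inner_add_right, ← hp, ← hq, ← hn]
  refine ⟨hne, ?_⟩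
  rw [hm]
  have hcosle : Real.cos θ ≤ n⁻¹ * (p + q) := by
    rw [inv_mul_eq_div, le_div_iff₀ hn0]
    linarith [hmain]
  have hfin : Real.arccos (n⁻¹ * (p + q)) ≤ θ := by
    have h1 := Real.monotone_arcsin hcosle
    have h2 : Real.arccos (Real.cos θ) = θ :=
      Real.arccos_cos hθ0 (by linarith [Real.pi_pos, hθpi])
    rw [Real.arccos_eq_pi_div_two_sub_arcsin] at h2 ⊢
    linarith
  exact hfin
end

section
/- Let n ≥ 1 and let γ : [0,1] → ℝ^{n+1} be a continuous path on the unit sphere S^n (‖γ(t)‖ = 1 for all t) whose image is not contained in any open hemisphere, i.e. for every unit vector v there exists t ∈ [0,1] with ⟪v, γ(t)⟫ ≤ 0. Then the length of γ is at least π. -/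
/-!
Suppose the length `L` of `γ` were less than `π`. Since `γ` is continuous, its variation function
is continuous, so some parameter `m` splits `γ` into two arcs of length `L / 2`. The great-circle
distance `angle x y` between two points of the sphere is at most the length of any spherical path
joining them (angles are subadditive and agree with chord lengths up to third order), so every
point of `γ` is at angle at most `L / 2 < π / 2` from `γ m`: the whole curve lies in the open
hemisphere with pole `γ m`.
-/

open scoped RealInnerProductSpace ENNReal Topology
open Set Filter Real

theorem BoundedVariationOn.continuousOn_variationOnFromTo {α E : Type*} [LinearOrder α]
    [TopologicalSpace α] [OrderTopology α] [PseudoEMetricSpace E] {f : α → E} {s : Set α}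
    (hf : BoundedVariationOn f s) (hc : ContinuousOn f s) {a : α} (ha : a ∈ s) :
    ContinuousOn (variationOnFromTo f s a) s := by
  intro x hx
  have hsplit : ∀ y ∈ s, variationOnFromTo f s a x +
      ((eVariationOn f (s ∩ Icc x y)).toReal - (eVariationOn f (s ∩ Icc y x)).toReal) =
      variationOnFromTo f s a y := by
    intro y hy
    rw [← variationOnFromTo.add hf.locallyBoundedVariationOn ha hx hy]
    congr 1
    rcases le_total x y with hxy | hyx
    · rw [variationOnFromTo.eq_of_le _ _ hxy,
        eVariationOn.subsingleton f ((subsingleton_Icc_of_ge hxy).anti inter_subset_right),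
        ENNReal.toReal_zero, sub_zero]
    · rw [variationOnFromTo.eq_of_ge _ _ hyx,
        eVariationOn.subsingleton f ((subsingleton_Icc_of_ge hyx).anti inter_subset_right),
        ENNReal.toReal_zero, zero_sub]
  have hright := (ENNReal.tendsto_toReal ENNReal.zero_ne_top).comp
    (hf.tendsto_eVariationOn_Icc_zero_right x ((hc x hx).mono inter_subset_left))
  have hleft := (ENNReal.tendsto_toReal ENNReal.zero_ne_top).comp
    (hf.tendsto_eVariationOn_Icc_zero_left ((hc x hx).mono inter_subset_left))
  unfold ContinuousWithinAt
  simpa using (tendsto_const_nhds.add (hright.sub hleft)).congr'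
    (eventually_nhdsWithin_of_forall hsplit)

theorem BoundedVariationOn.exists_eVariationOn_Icc_eq {α E : Type*}
    [ConditionallyCompleteLinearOrder α] [DenselyOrdered α] [TopologicalSpace α] [OrderTopology α]
    [PseudoEMetricSpace E] {f : α → E} {a b : α} (hab : a ≤ b)
    (hf : BoundedVariationOn f (Icc a b)) (hc : ContinuousOn f (Icc a b)) :
    ∃ m ∈ Icc a b, eVariationOn f (Icc a m) = eVariationOn f (Icc m b) := by
  set φ := variationOnFromTo f (Icc a b) a with hφ
  have ha : a ∈ Icc a b := left_mem_Icc.2 hab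
  have hb : b ∈ Icc a b := right_mem_Icc.2 hab
  have hφa : φ a = 0 := variationOnFromTo.self _ _ _
  have hφb : 0 ≤ φ b := variationOnFromTo.nonneg_of_le _ _ hab
  obtain ⟨m, hm, hφm⟩ := intermediate_value_Icc hab (hf.continuousOn_variationOnFromTo hc ha)
    (show φ b / 2 ∈ Icc (φ a) (φ b) from ⟨by linarith, by linarith⟩)
  refine ⟨m, hm, ?_⟩
  have hleft : (eVariationOn f (Icc a m)).toReal = φ m := by
    rw [hφ, variationOnFromTo.eq_of_le _ _ hm.1, inter_eq_right.2 (Icc_subset_Icc_right hm.2)]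
  have hright : (eVariationOn f (Icc m b)).toReal = φ b - φ m := by
    rw [hφ, variationOnFromTo.sub_right hf.locallyBoundedVariationOn ha hb hm,
      variationOnFromTo.eq_of_le _ _ hm.2, inter_eq_right.2 (Icc_subset_Icc_left hm.1)]
  rw [← ENNReal.toReal_eq_toReal_iff' (hf.mono (Icc_subset_Icc_right hm.2))
    (hf.mono (Icc_subset_Icc_left hm.1)), hleft, hright]
  linarith

theorem le_mul_eVariationOn_of_forall_le_mul_edist {E : Type*} [PseudoEMetricSpace E]
    (d : E → E → ℝ≥0∞) (hd : ∀ x y z, d x z ≤ d x y + d y z) {f : ℝ → E} {K : ℝ≥0∞}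
    {a b δ : ℝ} (hab : a ≤ b) (hδ : 0 < δ)
    (hloc : ∀ s ∈ Icc a b, ∀ t ∈ Icc a b, s ≤ t → t ≤ s + δ →
      d (f s) (f t) ≤ K * edist (f s) (f t)) :
    d (f a) (f b) ≤ K * eVariationOn f (Icc a b) := by
  suffices h : ∀ N : ℕ, ∀ s ∈ Icc a b, b - s ≤ N * δ →
      d (f s) (f b) ≤ K * eVariationOn f (Icc s b) by
    obtain ⟨N, hN⟩ := exists_nat_ge ((b - a) / δ)
    exact h N a (left_mem_Icc.2 hab) (by rwa [div_le_iff₀ hδ] at hN)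
  intro N
  induction N with
  | zero =>
    intro s hs hsb
    obtain rfl : s = b := le_antisymm hs.2 (by simpa using hsb)
    simpa using hloc s hs s hs le_rfl (by linarith)
  | succ N ih =>
    intro s hs hsb
    set r := min b (s + δ)
    have hsr : s ≤ r := le_min hs.2 (by linarith)
    have hr : r ∈ Icc a b := ⟨hs.1.trans hsr, min_le_left _ _⟩
    have hrb : b - r ≤ N * δ := by
      rcases min_cases b (s + δ) with ⟨h, -⟩ | ⟨h, -⟩ <;> simp only [r, h] <;> push_cast at hsb
      · nlinarith [N.cast_nonneg (α := ℝ)]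
      · linarith
    calc d (f s) (f b) ≤ d (f s) (f r) + d (f r) (f b) := hd _ _ _
      _ ≤ K * edist (f s) (f r) + K * eVariationOn f (Icc r b) :=
        add_le_add (hloc s hs r hr hsr (min_le_right _ _)) (ih r hr hrb)
      _ ≤ K * eVariationOn f (Icc s r) + K * eVariationOn f (Icc r b) := by
        gcongr
        exact eVariationOn.edist_le f (left_mem_Icc.2 hsr) (right_mem_Icc.2 hsr)
      _ = K * eVariationOn f (Icc s b) := by
        rw [← mul_add]
        simpa using congrArg (K * ·) (eVariationOn.Icc_add_Icc f hsr hr.2 (mem_univ r))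

namespace InnerProductGeometry

variable {E : Type*} [NormedAddCommGroup E] [InnerProductSpace ℝ E]

theorem norm_sub_eq_two_mul_sin_half_angle {x y : E} (hx : ‖x‖ = 1) (hy : ‖y‖ = 1) :
    ‖x - y‖ = 2 * sin (angle x y / 2) := by
  have hsin : 0 ≤ sin (angle x y / 2) :=
    sin_nonneg_of_nonneg_of_le_pi (by linarith [angle_nonneg x y])
      (by linarith [angle_le_pi x y, pi_pos])
  refine (sq_eq_sq₀ (norm_nonneg _) (by positivity)).1 ?_
  have hcos := cos_two_mul (angle x y / 2)
  rw [mul_div_cancel₀ _ two_ne_zero, ← inner_eq_cos_angle_of_norm_eq_one hx hy] at hcos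
  rw [norm_sub_sq_real, hx, hy, mul_pow, hcos]
  nlinarith [sin_sq_add_cos_sq (angle x y / 2)]

theorem angle_le_norm_sub_add_norm_sub_pow_three {x y : E} (hx : ‖x‖ = 1) (hy : ‖y‖ = 1) :
    angle x y ≤ ‖x - y‖ + ‖x - y‖ ^ 3 / 3 := by
  set φ := angle x y / 2 with hφ
  have hφ0 : 0 ≤ φ := by linarith [angle_nonneg x y]
  have hφπ : φ ≤ π / 2 := by linarith [angle_le_pi x y]
  have hjordan : φ ≤ 2 * sin φ := by
    have := mul_le_sin hφ0 hφπ
    rw [div_mul_eq_mul_div, div_le_iff₀ pi_pos] at this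
    have hsin : 0 ≤ sin φ := sin_nonneg_of_nonneg_of_le_pi hφ0 (by linarith [pi_pos])
    nlinarith [mul_le_mul_of_nonneg_left pi_le_four hsin]
  have hcube : φ - φ ^ 3 / 6 ≤ sin φ := by
    rcases hφ0.eq_or_lt with h | h
    · simp [← h]
    · exact (sin_gt_sub_cube h).le
  rw [norm_sub_eq_two_mul_sin_half_angle hx hy, ← hφ]
  have := pow_le_pow_left₀ hφ0 hjordan 3
  nlinarith

theorem ofReal_angle_le_eVariationOn {γ : ℝ → E} {a b : ℝ} (hab : a ≤ b)
    (hγ : ContinuousOn γ (Icc a b)) (hsph : ∀ t ∈ Icc a b, ‖γ t‖ = 1) :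
    ENNReal.ofReal (angle (γ a) (γ b)) ≤ eVariationOn γ (Icc a b) := by
  have hε : ∀ ε > 0, ENNReal.ofReal (angle (γ a) (γ b)) ≤
      ENNReal.ofReal (1 + ε ^ 2) * eVariationOn γ (Icc a b) := by
    intro ε hε
    obtain ⟨δ, hδ, hδε⟩ := Metric.uniformContinuousOn_iff.1
      (isCompact_Icc.uniformContinuousOn_of_continuous hγ) ε hε
    refine le_mul_eVariationOn_of_forall_le_mul_edist (fun x y ↦ ENNReal.ofReal (angle x y))
      (fun x y z ↦ (ENNReal.ofReal_le_ofReal (angle_le_angle_add_angle x y z)).trans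
        ENNReal.ofReal_add_le) hab (half_pos hδ) fun s hs t ht hst htδ ↦ ?_
    have hc : ‖γ s - γ t‖ ≤ ε := by
      rw [← dist_eq_norm]
      refine (hδε s hs t ht ?_).le
      rw [Real.dist_eq, abs_lt]
      constructor <;> linarith
    have := angle_le_norm_sub_add_norm_sub_pow_three (hsph s hs) (hsph t ht)
    rw [edist_dist, dist_eq_norm, ← ENNReal.ofReal_mul (by positivity)]
    apply ENNReal.ofReal_le_ofReal
    nlinarith [norm_nonneg (γ s - γ t), mul_le_mul hc hc (norm_nonneg _) hε.le]
  have hlim : Tendsto (fun ε : ℝ ↦ ENNReal.ofReal (1 + ε ^ 2) * eVariationOn γ (Icc a b))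
      (𝓝[>] 0) (𝓝 (eVariationOn γ (Icc a b))) := by
    have h1 : Tendsto (fun ε : ℝ ↦ ENNReal.ofReal (1 + ε ^ 2)) (𝓝[>] 0) (𝓝 1) := by
      have hcont : Continuous fun ε : ℝ ↦ ENNReal.ofReal (1 + ε ^ 2) :=
        ENNReal.continuous_ofReal.comp (by fun_prop)
      simpa using (hcont.tendsto 0).mono_left nhdsWithin_le_nhds
    simpa using ENNReal.Tendsto.mul_const h1 (Or.inl one_ne_zero)
  exact ge_of_tendsto hlim (eventually_nhdsWithin_of_forall hε)

theorem ofReal_angle_le_max_eVariationOn {γ : ℝ → E} {a b m t : ℝ}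
    (hγ : ContinuousOn γ (Icc a b)) (hsph : ∀ t ∈ Icc a b, ‖γ t‖ = 1) (hm : m ∈ Icc a b)
    (ht : t ∈ Icc a b) :
    ENNReal.ofReal (angle (γ m) (γ t)) ≤
      max (eVariationOn γ (Icc a m)) (eVariationOn γ (Icc m b)) := by
  have hsub : ∀ s u, a ≤ s → s ≤ u → u ≤ b →
      ENNReal.ofReal (angle (γ s) (γ u)) ≤ eVariationOn γ (Icc s u) := fun s u has hsu hub ↦
    ofReal_angle_le_eVariationOn hsu (hγ.mono (Icc_subset_Icc has hub))
      fun r hr ↦ hsph r ⟨has.trans hr.1, hr.2.trans hub⟩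
  rcases le_total t m with htm | hmt
  · rw [angle_comm]
    exact le_max_of_le_left ((hsub t m ht.1 htm hm.2).trans
      (eVariationOn.mono _ (Icc_subset_Icc_left ht.1)))
  · exact le_max_of_le_right ((hsub m t hm.1 hmt ht.2).trans
      (eVariationOn.mono _ (Icc_subset_Icc_right ht.2)))

end InnerProductGeometry

open InnerProductGeometry

theorem curve_not_in_open_hemisphere_length_ge_pi_general
    (n : ℕ)
    (γ : ℝ → EuclideanSpace ℝ (Fin (n + 1)))
    (hγ : ContinuousOn γ (Set.Icc 0 1))
    (hsph : ∀ t ∈ Set.Icc (0 : ℝ) 1, ‖γ t‖ = 1)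
    (hhemi : ∀ v : EuclideanSpace ℝ (Fin (n + 1)), ‖v‖ = 1 →
      ∃ t ∈ Set.Icc (0 : ℝ) 1, ⟪v, γ t⟫ ≤ 0) :
    ENNReal.ofReal Real.pi ≤ eVariationOn γ (Set.Icc 0 1) := by
  by_contra! hshort
  obtain ⟨m, hm, hhalves⟩ :=
    BoundedVariationOn.exists_eVariationOn_Icc_eq zero_le_one hshort.ne_top hγ
  obtain ⟨t, ht, hinner⟩ := hhemi (γ m) (hsph m hm)
  have hnear : ENNReal.ofReal (angle (γ m) (γ t)) ≤ eVariationOn γ (Icc 0 m) := by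
    simpa [← hhalves] using ofReal_angle_le_max_eVariationOn hγ hsph hm ht
  have hsum : eVariationOn γ (Icc 0 m) + eVariationOn γ (Icc m 1) = eVariationOn γ (Icc 0 1) := by
    simpa using eVariationOn.Icc_add_Icc γ hm.1 hm.2 (mem_univ m)
  have hdouble : ENNReal.ofReal (2 * angle (γ m) (γ t)) < ENNReal.ofReal π :=
    calc ENNReal.ofReal (2 * angle (γ m) (γ t))
        = ENNReal.ofReal (angle (γ m) (γ t)) + ENNReal.ofReal (angle (γ m) (γ t)) := by
          rw [two_mul, ENNReal.ofReal_add (angle_nonneg _ _) (angle_nonneg _ _)]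
      _ ≤ eVariationOn γ (Icc 0 m) + eVariationOn γ (Icc m 1) := by
          rw [← hhalves]; exact add_le_add hnear hnear
      _ < ENNReal.ofReal π := hsum ▸ hshort
  rw [ENNReal.ofReal_lt_ofReal_iff pi_pos] at hdouble
  rw [inner_eq_cos_angle_of_norm_eq_one (hsph m hm) (hsph t ht)] at hinner
  exact hinner.not_gt (cos_pos_of_mem_Ioo ⟨by linarith [angle_nonneg (γ m) (γ t)], by linarith⟩)

/-- A continuous path on the unit sphere `S^n ⊂ ℝ^{n+1}` whose image is not contained
in any open hemisphere (for every unit vector `v` there is `t` with `⟪v, γ t⟫ ≤ 0`)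
has length at least `π`. -/
theorem curve_not_in_open_hemisphere_length_ge_pi
    (n : ℕ) (hn : 1 ≤ n)
    (γ : ℝ → EuclideanSpace ℝ (Fin (n + 1)))
    (hγ : ContinuousOn γ (Set.Icc 0 1))
    (hsph : ∀ t ∈ Set.Icc (0 : ℝ) 1, ‖γ t‖ = 1)
    (hhemi : ∀ v : EuclideanSpace ℝ (Fin (n + 1)), ‖v‖ = 1 →
      ∃ t ∈ Set.Icc (0 : ℝ) 1, ⟪v, γ t⟫ ≤ 0) :
    ENNReal.ofReal Real.pi ≤ eVariationOn γ (Set.Icc 0 1) :=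
  curve_not_in_open_hemisphere_length_ge_pi_general n γ hγ hsph hhemi
end
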